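/- arXiv:2407.00642 — 7 statements merged into one kernel-verified Lean document; each statement's English description precedes it below -/
import Mathlib

section
/- Let k be an integer with k > 1 and let m, n be integers with n ≠ 0. Then n divides m in the ring ℤ if and only if k^n − 1 divides k^m − 1 in the ring ℤ[1/k]. -/
/-- The subring `ℤ[1/k] = {z·k^i : z, i ∈ ℤ}` of `ℚ`, as a set. -/
def zkSet (k : ℤ) : Set ℚ := {q | ∃ z i : ℤ, q = (z : ℚ) * (k : ℚ) ^ i}

lemma zk_k0 {k : ℤ} (hk : 1 < k) : (k : ℚ) ≠ 0 := by
  have : (0:ℚ) < (k:ℚ) := by exact_mod_cast lt_trans one_pos hk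
  exact ne_of_gt this

lemma zk_zpow {k : ℤ} (i : ℤ) : (k : ℚ) ^ i ∈ zkSet k := ⟨1, i, by simp⟩

lemma zk_mul {k : ℤ} (hk : 1 < k) {a b : ℚ} (ha : a ∈ zkSet k) (hb : b ∈ zkSet k) :
    a * b ∈ zkSet k := by
  obtain ⟨z1, i1, rfl⟩ := ha
  obtain ⟨z2, i2, rfl⟩ := hb
  refine ⟨z1 * z2, i1 + i2, ?_⟩
  rw [zpow_add₀ (zk_k0 hk)]
  push_cast
  ring

lemma zk_neg {k : ℤ} {a : ℚ} (ha : a ∈ zkSet k) : -a ∈ zkSet k := by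
  obtain ⟨z1, i1, rfl⟩ := ha
  exact ⟨-z1, i1, by push_cast; ring⟩

lemma zk_add {k : ℤ} (hk : 1 < k) {a b : ℚ} (ha : a ∈ zkSet k) (hb : b ∈ zkSet k) :
    a + b ∈ zkSet k := by
  obtain ⟨z1, i1, rfl⟩ := ha
  obtain ⟨z2, i2, rfl⟩ := hb
  set t := min i1 i2 with ht
  refine ⟨z1 * k ^ (i1 - t).toNat + z2 * k ^ (i2 - t).toNat, t, ?_⟩
  have h1 : ((i1 - t).toNat : ℤ) = i1 - t := Int.toNat_of_nonneg (by omega)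
  have h2 : ((i2 - t).toNat : ℤ) = i2 - t := Int.toNat_of_nonneg (by omega)
  have c1 : (k:ℚ) ^ ((i1 - t).toNat) = (k:ℚ) ^ (i1 - t) := by rw [← zpow_natCast, h1]
  have c2 : (k:ℚ) ^ ((i2 - t).toNat) = (k:ℚ) ^ (i2 - t) := by rw [← zpow_natCast, h2]
  push_cast
  rw [c1, c2, add_mul, mul_assoc, mul_assoc, ← zpow_add₀ (zk_k0 hk), ← zpow_add₀ (zk_k0 hk),
    sub_add_cancel, sub_add_cancel]

lemma zk_sub {k : ℤ} (hk : 1 < k) {a b : ℚ} (ha : a ∈ zkSet k) (hb : b ∈ zkSet k) :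
    a - b ∈ zkSet k := by
  simpa [sub_eq_add_neg] using zk_add hk ha (zk_neg hb)

/-- forward, nat version -/
lemma zk_fwd_nat {k : ℤ} (hk : 1 < k) (n : ℤ) (q : ℕ) :
    ∃ c ∈ zkSet k, (k : ℚ) ^ (n * q) - 1 = ((k : ℚ) ^ n - 1) * c := by
  induction q with
  | zero => exact ⟨0, ⟨0, 0, by simp⟩, by simp⟩
  | succ q ih =>
      obtain ⟨c, hc, hce⟩ := ih
      refine ⟨(k:ℚ) ^ (n * q) + c, zk_add hk (zk_zpow (n*q)) hc, ?_⟩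
      have e : (k:ℚ) ^ (n * ((q:ℤ)+1)) = (k:ℚ) ^ (n * q) * (k:ℚ) ^ n := by
        rw [← zpow_add₀ (zk_k0 hk)]; congr 1; ring
      have e2 : (k:ℚ) ^ (n * ((q:ℕ)+1:ℕ)) = (k:ℚ) ^ (n * ((q:ℤ)+1)) := by
        congr 1
      rw [e2, e]
      have : (k:ℚ) ^ (n * q) = ((k : ℚ) ^ n - 1) * c + 1 := by linarith
      rw [this]; ring

/-- forward, int version -/
lemma zk_fwd {k : ℤ} (hk : 1 < k) (n q : ℤ) :
    ∃ c ∈ zkSet k, (k : ℚ) ^ (n * q) - 1 = ((k : ℚ) ^ n - 1) * c := by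
  rcases le_or_gt 0 q with h | h
  · obtain ⟨q', rfl⟩ : ∃ q' : ℕ, q = q' := ⟨q.toNat, (Int.toNat_of_nonneg h).symm⟩
    exact zk_fwd_nat hk n q'
  · obtain ⟨q', hq'⟩ : ∃ q' : ℕ, q = -q' := ⟨(-q).toNat, by omega⟩
    obtain ⟨c, hc, hce⟩ := zk_fwd_nat hk n q'
    refine ⟨-((k:ℚ) ^ (n * q) * c), zk_neg (zk_mul hk (zk_zpow (n*q)) hc), ?_⟩
    have hinv : (k:ℚ) ^ (n * q) * (k:ℚ) ^ (n * (q':ℤ)) = 1 := by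
      rw [← zpow_add₀ (zk_k0 hk)]
      have : n * q + n * q' = 0 := by rw [hq']; ring
      rw [this, zpow_zero]
    calc (k:ℚ) ^ (n * q) - 1 = -((k:ℚ) ^ (n*q) * ((k:ℚ) ^ (n * (q':ℤ)) - 1)) := by
          rw [mul_sub, hinv]; ring
      _ = ((k : ℚ) ^ n - 1) * (-((k:ℚ) ^ (n * q) * c)) := by rw [hce]; ring

/-- coprimality of `k^t - 1` and `k` in ℤ -/
lemma zk_coprime {k : ℤ} (t : ℕ) (hnn : 0 < t) : IsCoprime (k ^ t - 1) (k : ℤ) := by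
  refine ⟨-1, k ^ (t - 1), ?_⟩
  have : k ^ (t - 1) * k = k ^ t := by
    rw [← pow_succ]; congr 1; omega
  rw [this]; ring

/-- main backward step for positive n -/
lemma zk_bwd {k : ℤ} (hk : 1 < k) {m n : ℤ} (hn : 0 < n)
    (h : ∃ c ∈ zkSet k, (k : ℚ) ^ m - 1 = ((k : ℚ) ^ n - 1) * c) : n ∣ m := by
  obtain ⟨c, hc, hce⟩ := h
  set q : ℤ := m / n with hq
  set r : ℤ := m % n with hr
  have hmr : m = n * q + r := (Int.mul_ediv_add_emod m n).symm
  have hr0 : 0 ≤ r := Int.emod_nonneg m (by omega)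
  have hrn : r < n := Int.emod_lt_of_pos m hn
  obtain ⟨c', hc', hce'⟩ := zk_fwd hk n q
  have key : (k:ℚ) ^ r - 1 = ((k:ℚ) ^ n - 1) * ((k:ℚ) ^ (-(n*q)) * (c - c')) := by
    have hsplit : (k:ℚ) ^ m = (k:ℚ) ^ (n*q) * (k:ℚ) ^ r := by
      rw [← zpow_add₀ (zk_k0 hk), ← hmr]
    have hinv : (k:ℚ) ^ (-(n*q)) * (k:ℚ) ^ (n*q) = 1 := by
      rw [← zpow_add₀ (zk_k0 hk)]; simp
    calc (k:ℚ) ^ r - 1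
        = (k:ℚ) ^ (-(n*q)) * ((k:ℚ)^(n*q) * (k:ℚ) ^ r - (k:ℚ)^(n*q)) := by
          rw [mul_sub, ← mul_assoc, hinv]; ring
      _ = (k:ℚ) ^ (-(n*q)) * (((k:ℚ)^m - 1) - ((k:ℚ)^(n*q) - 1)) := by
          rw [hsplit]; ring
      _ = (k:ℚ) ^ (-(n*q)) * (((k:ℚ)^n - 1) * c - ((k:ℚ)^n - 1) * c') := by
          rw [← hce, ← hce']
      _ = ((k:ℚ) ^ n - 1) * ((k:ℚ) ^ (-(n*q)) * (c - c')) := by ring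
  have hmem : (k:ℚ) ^ (-(n*q)) * (c - c') ∈ zkSet k :=
    zk_mul hk (zk_zpow (-(n*q))) (zk_sub hk hc hc')
  obtain ⟨z, i, hzi⟩ := hmem
  rw [hzi] at key
  have cr : ((k:ℚ)) ^ r.toNat = (k:ℚ) ^ r := by
    rw [← zpow_natCast, Int.toNat_of_nonneg hr0]
  have cn : ((k:ℚ)) ^ n.toNat = (k:ℚ) ^ n := by
    rw [← zpow_natCast, Int.toNat_of_nonneg (le_of_lt hn)]
  have hdvd : (k ^ n.toNat - 1 : ℤ) ∣ (k ^ r.toNat - 1 : ℤ) := by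
    rcases le_or_gt 0 i with hi | hi
    · have key2 : ((k ^ r.toNat - 1 : ℤ) : ℚ)
          = (((k ^ n.toNat - 1) * (z * k ^ i.toNat) : ℤ) : ℚ) := by
        have ci : ((k:ℚ)) ^ i.toNat = (k:ℚ) ^ i := by
          rw [← zpow_natCast, Int.toNat_of_nonneg hi]
        push_cast
        rw [cr, cn, ci]
        exact key
      exact ⟨_, Rat.intCast_injective key2⟩
    · have key2 : (((k ^ r.toNat - 1) * k ^ (-i).toNat : ℤ) : ℚ)
          = (((k ^ n.toNat - 1) * z : ℤ) : ℚ) := by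
        have hki : ((k:ℚ)) ^ (-i).toNat = (k:ℚ) ^ (-i) := by
          rw [← zpow_natCast (k:ℚ), Int.toNat_of_nonneg (by omega)]
        push_cast
        rw [cr, cn, hki, key]
        have h1 : (k:ℚ) ^ i * (k:ℚ) ^ (-i) = 1 := by
          rw [← zpow_add₀ (zk_k0 hk)]; simp
        calc ((k:ℚ) ^ n - 1) * ((z:ℚ) * (k:ℚ) ^ i) * (k:ℚ) ^ (-i)
            = ((k:ℚ) ^ n - 1) * z * ((k:ℚ) ^ i * (k:ℚ) ^ (-i)) := by ring
          _ = ((k:ℚ) ^ n - 1) * z := by rw [h1]; ring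
      have hdd : (k ^ n.toNat - 1 : ℤ) ∣ (k ^ r.toNat - 1) * k ^ (-i).toNat :=
        ⟨z, Rat.intCast_injective key2⟩
      have hco : IsCoprime (k ^ n.toNat - 1 : ℤ) (k ^ (-i).toNat) :=
        (zk_coprime (n.toNat) (by omega)).pow_right
      exact hco.dvd_of_dvd_mul_right hdd
  have hpow_lt : k ^ r.toNat < k ^ n.toNat := pow_lt_pow_right₀ hk (by omega)
  rcases eq_or_ne r 0 with h0 | h0
  · exact ⟨q, by omega⟩
  · exfalso
    have h1 : (1:ℤ) < k ^ r.toNat := by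
      calc (1:ℤ) = k ^ 0 := by simp
        _ < k ^ r.toNat := pow_lt_pow_right₀ hk (by omega)
    have := Int.le_of_dvd (by omega) hdvd
    omega

/-- **Fact 2.** Let `k > 1` and `m, n : ℤ` with `n ≠ 0`. Then `n ∣ m` in `ℤ` iff
`k^n - 1` divides `k^m - 1` in the ring `ℤ[1/k]`. -/
theorem int_dvd_iff_dvd_in_zk (k : ℤ) (hk : 1 < k) (m n : ℤ) (hn : n ≠ 0) :
    n ∣ m ↔ ∃ c ∈ zkSet k, (k : ℚ) ^ m - 1 = ((k : ℚ) ^ n - 1) * c := by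
  constructor
  · rintro ⟨q, rfl⟩
    exact zk_fwd hk n q
  · intro h
    rcases lt_or_gt_of_ne hn with hneg | hpos
    · obtain ⟨c, hc, hce⟩ := h
      have hu : (k:ℚ) ^ (-n) * (k:ℚ) ^ n = 1 := by
        rw [← zpow_add₀ (zk_k0 hk)]; simp
      have hflip : ((k:ℚ) ^ n - 1) = ((k:ℚ) ^ (-n) - 1) * (-(k:ℚ) ^ n) := by
        calc (k:ℚ) ^ n - 1 = -((k:ℚ)^(-n) * (k:ℚ)^n) + (k:ℚ)^n := by rw [hu]; ring
          _ = ((k:ℚ) ^ (-n) - 1) * (-(k:ℚ) ^ n) := by ring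
      have h2 : ∃ c ∈ zkSet k, (k : ℚ) ^ m - 1 = ((k : ℚ) ^ (-n) - 1) * c := by
        refine ⟨-(k:ℚ)^n * c, zk_mul hk (zk_neg (zk_zpow n)) hc, ?_⟩
        rw [hce, hflip]; ring
      have hnd : -n ∣ m := zk_bwd hk (by omega : (0:ℤ) < -n) h2
      exact (neg_dvd).mp hnd
    · exact zk_bwd hk hpos h
end

section
/- Let k be an integer with k > 1 and let y ∈ ℤ[1/k]. If k^n − 1 divides y in the ring ℤ[1/k] for every positive integer n, then y = 0. -/
theorem isCoprime_pow_sub_one_self {R : Type*} [CommRing R] (x : R) {n : ℕ} (hn : n ≠ 0) :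
    IsCoprime (x ^ n - 1) x :=
  ⟨-1, x ^ (n - 1), by rw [← pow_succ, Nat.sub_add_cancel (Nat.one_le_iff_ne_zero.2 hn)]; ring⟩

theorem Int.eq_zero_of_forall_pow_sub_one_dvd {k z : ℤ} (hk : 1 < k)
    (h : ∀ n : ℕ, 0 < n → k ^ n - 1 ∣ z) : z = 0 := by
  have hbound : ∀ n : ℕ, (n : ℤ) ≤ k ^ n - 1 := fun n => by
    have := one_add_mul_le_pow (a := k - 1) (by omega) n
    rw [add_sub_cancel] at this
    nlinarith
  refine Int.eq_zero_of_abs_lt_dvd (h (z.natAbs + 1) (Nat.succ_pos _)) ?_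
  have := hbound (z.natAbs + 1)
  push_cast at this
  linarith

section zkSet

variable {k : ℤ}

theorem mul_pow_mem_zkSet (hk : k ≠ 0) {c : ℚ} (hc : c ∈ zkSet k) (m : ℕ) :
    c * (k : ℚ) ^ m ∈ zkSet k := by
  obtain ⟨w, j, rfl⟩ := hc
  exact ⟨w, j + m, by rw [zpow_add₀ (Int.cast_ne_zero.2 hk), zpow_natCast, mul_assoc]⟩

theorem exists_mul_pow_eq_intCast_of_mem_zkSet (hk : k ≠ 0) {y : ℚ} (hy : y ∈ zkSet k) :
    ∃ m : ℕ, ∃ z : ℤ, y * (k : ℚ) ^ m = z := by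
  obtain ⟨z, i, rfl⟩ := hy
  have hi : 0 ≤ i + (-i).toNat := by omega
  refine ⟨(-i).toNat, z * k ^ (i + (-i).toNat).toNat, ?_⟩
  push_cast
  rw [mul_assoc, ← zpow_natCast, ← zpow_add₀ (Int.cast_ne_zero.2 hk), ← zpow_natCast,
    Int.toNat_of_nonneg hi]

theorem dvd_of_intCast_eq_mul_of_mem_zkSet (hk : k ≠ 0) {a z : ℤ} (hak : IsCoprime a k)
    {c : ℚ} (hc : c ∈ zkSet k) (h : (z : ℚ) = a * c) : a ∣ z := by
  obtain ⟨e, w, hw⟩ := exists_mul_pow_eq_intCast_of_mem_zkSet hk hc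
  have hze : z * k ^ e = a * w := by
    have : (z : ℚ) * k ^ e = a * w := by rw [h, mul_assoc, hw]
    exact_mod_cast this
  exact hak.pow_right.dvd_of_dvd_mul_right ⟨w, hze⟩

end zkSet

/-- **Fact 5.** Let `k > 1` and `y ∈ ℤ[1/k]`. If `k^n - 1` divides `y` in `ℤ[1/k]`
for every positive integer `n`, then `y = 0`. -/
theorem eq_zero_of_forall_pow_sub_one_dvd (k : ℤ) (hk : 1 < k) (y : ℚ) (hy : y ∈ zkSet k)
    (h : ∀ n : ℤ, 0 < n → ∃ c ∈ zkSet k, y = ((k : ℚ) ^ n - 1) * c) :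
    y = 0 := by
  have hk0 : k ≠ 0 := by omega
  obtain ⟨m, z, hz⟩ := exists_mul_pow_eq_intCast_of_mem_zkSet hk0 hy
  have hz0 : z = 0 := Int.eq_zero_of_forall_pow_sub_one_dvd hk fun n hn => by
    obtain ⟨c, hc, hyc⟩ := h n (by exact_mod_cast hn)
    refine dvd_of_intCast_eq_mul_of_mem_zkSet hk0 (isCoprime_pow_sub_one_self k hn.ne')
      (mul_pow_mem_zkSet hk0 hc m) ?_
    rw [← hz, hyc, zpow_natCast]
    push_cast
    ring
  have hym : y * (k : ℚ) ^ m = 0 := by rw [hz, hz0, Int.cast_zero]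
  simpa [hk0] using hym
end

section
/- Let k be an integer with k > 1. The assignment a ↦ (1,0), b ↦ (0,1) extends to a group isomorphism from the one-relator presented group BS(1,k) = ⟨a, b ∣ b⁻¹ a b = a^k⟩ onto the semidirect product G = ℤ[1/k] ⋊ ℤ. -/
theorem zkSet_neg {k : ℤ} {q : ℚ} (hq : q ∈ zkSet k) : -q ∈ zkSet k := by
  obtain ⟨z, i, rfl⟩ := hq
  exact ⟨-z, i, by push_cast; ring⟩

theorem zkSet_mul_zpow {k : ℤ} (hk : (k : ℚ) ≠ 0) {q : ℚ} (hq : q ∈ zkSet k) (j : ℤ) :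
    q * (k : ℚ) ^ j ∈ zkSet k := by
  obtain ⟨z, i, rfl⟩ := hq
  exact ⟨z, i + j, by rw [zpow_add₀ hk]; ring⟩

theorem zkSet_add {k : ℤ} (hk : (k : ℚ) ≠ 0) {p q : ℚ}
    (hp : p ∈ zkSet k) (hq : q ∈ zkSet k) : p + q ∈ zkSet k := by
  obtain ⟨z₁, i₁, rfl⟩ := hp
  obtain ⟨z₂, i₂, rfl⟩ := hq
  rcases le_total i₁ i₂ with h | h
  · refine ⟨z₁ + z₂ * k ^ (i₂ - i₁).toNat, i₁, ?_⟩
    have hpow : ((k : ℚ)) ^ ((i₂ - i₁).toNat) = (k : ℚ) ^ (i₂ - i₁) := by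
      rw [← zpow_natCast, Int.toNat_of_nonneg (by omega)]
    push_cast
    rw [hpow]
    have e : (k : ℚ) ^ (i₂ - i₁) * (k : ℚ) ^ i₁ = (k : ℚ) ^ i₂ := by
      rw [← zpow_add₀ hk, show i₂ - i₁ + i₁ = i₂ from by omega]
    linear_combination (-(z₂ : ℚ)) * e
  · refine ⟨z₂ + z₁ * k ^ (i₁ - i₂).toNat, i₂, ?_⟩
    have hpow : ((k : ℚ)) ^ ((i₁ - i₂).toNat) = (k : ℚ) ^ (i₁ - i₂) := by
      rw [← zpow_natCast, Int.toNat_of_nonneg (by omega)]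
    push_cast
    rw [hpow]
    have e : (k : ℚ) ^ (i₁ - i₂) * (k : ℚ) ^ i₂ = (k : ℚ) ^ i₁ := by
      rw [← zpow_add₀ hk, show i₁ - i₂ + i₂ = i₁ from by omega]
    linear_combination (-(z₁ : ℚ)) * e

/-- The underlying set of the semidirect product `G = ℤ[1/k] ⋊ ℤ` (modelled inside
`ℚ × ℤ`): pairs `(y, m)` with multiplication `(y₁,m₁)(y₂,m₂) = (y₁ + y₂·k^{-m₁}, m₁+m₂)`. -/
@[ext]
structure BSQ (k : ℤ) : Type where
  y : ℚ
  m : ℤ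

namespace BSQ

variable {k : ℤ}

instance : Mul (BSQ k) := ⟨fun g h => ⟨g.y + h.y * (k : ℚ) ^ (-g.m), g.m + h.m⟩⟩
instance : One (BSQ k) := ⟨⟨0, 0⟩⟩
instance : Inv (BSQ k) := ⟨fun g => ⟨-g.y * (k : ℚ) ^ g.m, -g.m⟩⟩

@[simp] theorem mul_y (g h : BSQ k) : (g * h).y = g.y + h.y * (k : ℚ) ^ (-g.m) := rfl
@[simp] theorem mul_m (g h : BSQ k) : (g * h).m = g.m + h.m := rfl
@[simp] theorem one_y : (1 : BSQ k).y = 0 := rfl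
@[simp] theorem one_m : (1 : BSQ k).m = 0 := rfl
@[simp] theorem inv_y (g : BSQ k) : g⁻¹.y = -g.y * (k : ℚ) ^ g.m := rfl
@[simp] theorem inv_m (g : BSQ k) : g⁻¹.m = -g.m := rfl

theorem kq_ne_zero [Fact (1 < k)] : (k : ℚ) ≠ 0 := by
  have h : (1 : ℤ) < k := Fact.out
  have h' : (k : ℤ) ≠ 0 := by omega
  exact_mod_cast h'

private theorem mul_assoc' [Fact (1 < k)] (a b c : BSQ k) : a * b * c = a * (b * c) := by
  ext
  · simp only [mul_y, mul_m, neg_add, zpow_add₀ (kq_ne_zero (k := k))]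
    ring
  · simp only [mul_m]
    ring

private theorem one_mul' [Fact (1 < k)] (a : BSQ k) : 1 * a = a := by
  ext <;> simp

private theorem mul_one' [Fact (1 < k)] (a : BSQ k) : a * 1 = a := by
  ext <;> simp

private theorem inv_mul_cancel' [Fact (1 < k)] (a : BSQ k) : a⁻¹ * a = 1 := by
  ext
  · simp only [mul_y, inv_y, inv_m, one_y, neg_neg]
    ring
  · simp only [mul_m, inv_m, one_m]
    ring

/-- The group structure on `ℤ[1/k] ⋊ ℤ` (here on the ambient `ℚ ⋊ ℤ`). -/
instance [Fact (1 < k)] : Group (BSQ k) where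
  mul := (· * ·)
  one := 1
  inv := Inv.inv
  mul_assoc := mul_assoc'
  one_mul := one_mul'
  mul_one := mul_one'
  inv_mul_cancel := inv_mul_cancel'

end BSQ

/-- The group `G = ℤ[1/k] ⋊ ℤ`, as the subgroup of `ℚ ⋊ ℤ` of pairs whose first
coordinate lies in `ℤ[1/k]`. -/
def bsSubgroup (k : ℤ) [Fact (1 < k)] : Subgroup (BSQ k) where
  carrier := {g | g.y ∈ zkSet k}
  one_mem' := ⟨0, 0, by norm_num⟩
  mul_mem' := by
    intro a b ha hb
    exact zkSet_add BSQ.kq_ne_zero ha (zkSet_mul_zpow BSQ.kq_ne_zero hb _)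
  inv_mem' := by
    intro a ha
    exact zkSet_mul_zpow BSQ.kq_ne_zero (zkSet_neg ha) _

theorem mem_bsSubgroup {k : ℤ} [Fact (1 < k)] {g : BSQ k} (h : g.y ∈ zkSet k) :
    g ∈ bsSubgroup k := h

/-- The single relation `b⁻¹·a·b·(a^k)⁻¹` of `BS(1,k) = ⟨a, b ∣ b⁻¹ a b = a^k⟩`,
with `a = FreeGroup.of true` and `b = FreeGroup.of false`. -/
def bsRels (k : ℤ) : Set (FreeGroup Bool) :=
  {(FreeGroup.of false)⁻¹ * FreeGroup.of true * FreeGroup.of false * ((FreeGroup.of true) ^ k)⁻¹}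

section Relation

variable {G : Type*} [Group G] {a b : G} {k : ℤ}

theorem inv_mul_zpow_mul_of_inv_mul_mul (h : b⁻¹ * a * b = a ^ k) (z : ℤ) :
    b⁻¹ * a ^ z * b = a ^ (k * z) := by
  have hconj : (b⁻¹ * a * b⁻¹⁻¹) ^ z = b⁻¹ * a ^ z * b⁻¹⁻¹ := conj_zpow
  rw [inv_inv] at hconj
  rw [← hconj, h, zpow_mul]

theorem inv_pow_mul_zpow_mul_pow_of_inv_mul_mul (h : b⁻¹ * a * b = a ^ k) (t : ℕ) (z : ℤ) :
    (b ^ t)⁻¹ * a ^ z * b ^ t = a ^ (z * k ^ t) := by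
  induction t generalizing z with
  | zero => simp
  | succ t ih =>
    calc (b ^ (t + 1))⁻¹ * a ^ z * b ^ (t + 1) = b⁻¹ * ((b ^ t)⁻¹ * a ^ z * b ^ t) * b := by
          group
      _ = a ^ (z * k ^ (t + 1)) := by
          rw [ih, inv_mul_zpow_mul_of_inv_mul_mul h, pow_succ]; ring_nf

theorem zpow_mul_pow_of_inv_mul_mul (h : b⁻¹ * a * b = a ^ k) (t : ℕ) (z : ℤ) :
    a ^ z * b ^ t = b ^ t * a ^ (z * k ^ t) := by
  rw [← inv_pow_mul_zpow_mul_pow_of_inv_mul_mul h, mul_assoc, mul_inv_cancel_left]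

theorem inv_pow_mul_zpow_of_inv_mul_mul (h : b⁻¹ * a * b = a ^ k) (t : ℕ) (z : ℤ) :
    (b ^ t)⁻¹ * a ^ z = a ^ (z * k ^ t) * (b ^ t)⁻¹ := by
  rw [← inv_pow_mul_zpow_mul_pow_of_inv_mul_mul h, mul_inv_cancel_right]

variable (a b) in
def bsNormalForms : Set G := {g | ∃ (j i : ℕ) (z : ℤ), g = b ^ j * a ^ z * (b ^ i)⁻¹}

theorem mul_mem_bsNormalForms (h : b⁻¹ * a * b = a ^ k) {g₁ g₂ : G}
    (h₁ : g₁ ∈ bsNormalForms a b) (h₂ : g₂ ∈ bsNormalForms a b) :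
    g₁ * g₂ ∈ bsNormalForms a b := by
  obtain ⟨j₁, i₁, z₁, rfl⟩ := h₁
  obtain ⟨j₂, i₂, z₂, rfl⟩ := h₂
  rcases le_total i₁ j₂ with hle | hle
  · obtain ⟨t, rfl⟩ := Nat.exists_eq_add_of_le hle
    refine ⟨j₁ + t, i₂, z₁ * k ^ t + z₂, ?_⟩
    calc b ^ j₁ * a ^ z₁ * (b ^ i₁)⁻¹ * (b ^ (i₁ + t) * a ^ z₂ * (b ^ i₂)⁻¹)
        = b ^ j₁ * (a ^ z₁ * b ^ t) * a ^ z₂ * (b ^ i₂)⁻¹ := by rw [pow_add]; group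
      _ = b ^ (j₁ + t) * a ^ (z₁ * k ^ t + z₂) * (b ^ i₂)⁻¹ := by
          rw [zpow_mul_pow_of_inv_mul_mul h, pow_add, zpow_add]; group
  · obtain ⟨t, rfl⟩ := Nat.exists_eq_add_of_le hle
    refine ⟨j₁, t + i₂, z₁ + z₂ * k ^ t, ?_⟩
    calc b ^ j₁ * a ^ z₁ * (b ^ (j₂ + t))⁻¹ * (b ^ j₂ * a ^ z₂ * (b ^ i₂)⁻¹)
        = b ^ j₁ * a ^ z₁ * ((b ^ t)⁻¹ * a ^ z₂) * (b ^ i₂)⁻¹ := by rw [pow_add]; group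
      _ = b ^ j₁ * a ^ (z₁ + z₂ * k ^ t) * (b ^ (t + i₂))⁻¹ := by
          rw [inv_pow_mul_zpow_of_inv_mul_mul h, pow_add, zpow_add]; group

theorem closure_subset_bsNormalForms (h : b⁻¹ * a * b = a ^ k) :
    (Subgroup.closure {a, b} : Set G) ⊆ bsNormalForms a b := by
  intro g hg
  induction hg using Subgroup.closure_induction with
  | mem g hg =>
    rcases hg with rfl | rfl
    · exact ⟨0, 0, 1, by simp⟩
    · exact ⟨1, 0, 0, by simp⟩
  | one => exact ⟨0, 0, 0, by simp⟩
  | mul _ _ _ _ h₁ h₂ => exact mul_mem_bsNormalForms h h₁ h₂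
  | inv _ _ hg =>
    obtain ⟨j, i, z, rfl⟩ := hg
    exact ⟨i, j, -z, by group⟩

end Relation

section Presentation

variable {k : ℤ} {G : Type*} [Group G]

theorem bsRels_lift_eq_one_iff {f : Bool → G} :
    (∀ r ∈ bsRels k, FreeGroup.lift f r = 1) ↔ (f false)⁻¹ * f true * f false = f true ^ k := by
  simp [bsRels, mul_inv_eq_one]

def bsLift {a b : G} (h : b⁻¹ * a * b = a ^ k) : PresentedGroup (bsRels k) →* G :=
  PresentedGroup.toGroup (f := fun x => cond x a b) (bsRels_lift_eq_one_iff.mpr h)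

theorem bsLift_of_true {a b : G} (h : b⁻¹ * a * b = a ^ k) : bsLift h (.of true) = a :=
  PresentedGroup.toGroup.of _

theorem bsLift_of_false {a b : G} (h : b⁻¹ * a * b = a ^ k) : bsLift h (.of false) = b :=
  PresentedGroup.toGroup.of _

theorem PresentedGroup.of_false_inv_mul_of_true_mul_of_false :
    (PresentedGroup.of false : PresentedGroup (bsRels k))⁻¹ * .of true * .of false =
      .of true ^ k := by
  have h := PresentedGroup.one_of_mem (rels := bsRels k) rfl
  simp only [map_mul, map_inv, map_zpow, mul_inv_eq_one] at h
  exact h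

theorem PresentedGroup.mem_bsNormalForms (g : PresentedGroup (bsRels k)) :
    g ∈ bsNormalForms (.of true) (.of false) := by
  have hgen : g ∈ Subgroup.closure {.of true, .of false} :=
    PresentedGroup.generated_by _ _ (fun x => Subgroup.subset_closure (by cases x <;> simp)) g
  exact closure_subset_bsNormalForms PresentedGroup.of_false_inv_mul_of_true_mul_of_false hgen

end Presentation

namespace BSQ

variable {k : ℤ} [Fact (1 < k)]

theorem mk_one_zero_zpow (n : ℤ) : (⟨1, 0⟩ : BSQ k) ^ n = ⟨n, 0⟩ := by
  induction n using Int.induction_on with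
  | zero => rfl
  | succ n ih => rw [zpow_add_one, ih]; ext <;> simp
  | pred n ih => rw [zpow_sub_one, ih]; ext <;> simp [sub_eq_add_neg]

theorem mk_zero_one_zpow (n : ℤ) : (⟨0, 1⟩ : BSQ k) ^ n = ⟨0, n⟩ := by
  induction n using Int.induction_on with
  | zero => rfl
  | succ n ih => rw [zpow_add_one, ih]; ext <;> simp
  | pred n ih => rw [zpow_sub_one, ih]; ext <;> simp [sub_eq_add_neg]

theorem mk_zero_one_inv_mul_mul :
    (⟨0, 1⟩ : BSQ k)⁻¹ * ⟨1, 0⟩ * ⟨0, 1⟩ = (⟨1, 0⟩ : BSQ k) ^ k := by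
  rw [mk_one_zero_zpow]; ext <;> simp

end BSQ

section Homomorphism

variable (k : ℤ) [Fact (1 < k)]

def bsHom : PresentedGroup (bsRels k) →* BSQ k := bsLift BSQ.mk_zero_one_inv_mul_mul

variable {k}

theorem bsHom_zpow_mul_zpow_mul_zpow (n z m : ℤ) :
    bsHom k ((.of false) ^ n * (.of true) ^ z * (.of false) ^ m) =
      ⟨z * (k : ℚ) ^ (-n), n + m⟩ := by
  simp only [bsHom, map_mul, map_zpow, bsLift_of_true, bsLift_of_false, BSQ.mk_one_zero_zpow,
    BSQ.mk_zero_one_zpow]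
  ext <;> simp

theorem bsHom_pow_mul_zpow_mul_inv_pow (j i : ℕ) (z : ℤ) :
    bsHom k ((.of false) ^ j * (.of true) ^ z * ((.of false) ^ i)⁻¹) =
      ⟨z * (k : ℚ) ^ (-(j : ℤ)), j - i⟩ := by
  rw [← zpow_natCast, ← zpow_natCast, ← zpow_neg, bsHom_zpow_mul_zpow_mul_zpow, sub_eq_add_neg]

theorem bsHom_injective : Function.Injective (bsHom k) := by
  refine (injective_iff_map_eq_one _).mpr fun g hg => ?_
  obtain ⟨j, i, z, rfl⟩ := PresentedGroup.mem_bsNormalForms g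
  rw [bsHom_pow_mul_zpow_mul_inv_pow] at hg
  have hz : (z : ℚ) * (k : ℚ) ^ (-(j : ℤ)) = 0 := congrArg BSQ.y hg
  have hij : (j : ℤ) - i = 0 := congrArg BSQ.m hg
  obtain rfl : z = 0 := by
    exact_mod_cast (mul_eq_zero.mp hz).resolve_right (zpow_ne_zero _ BSQ.kq_ne_zero)
  obtain rfl : i = j := by omega
  simp

theorem range_bsHom : (bsHom k).range = bsSubgroup k := by
  ext g
  constructor
  · rintro ⟨x, rfl⟩
    obtain ⟨j, i, z, rfl⟩ := PresentedGroup.mem_bsNormalForms x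
    rw [bsHom_pow_mul_zpow_mul_inv_pow]
    exact ⟨z, -j, rfl⟩
  · rintro ⟨z, t, hg⟩
    refine ⟨(.of false) ^ (-t) * (.of true) ^ z * (.of false) ^ (t + g.m), ?_⟩
    rw [bsHom_zpow_mul_zpow_mul_zpow, neg_neg, neg_add_cancel_left, ← hg]

end Homomorphism

/-- **BS(1,k) ≅ ℤ[1/k] ⋊ ℤ.** The assignment `a ↦ (1,0)`, `b ↦ (0,1)` extends to a
group isomorphism from the presented group `⟨a, b ∣ b⁻¹ a b = a^k⟩` onto
`G = ℤ[1/k] ⋊ ℤ`. -/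
theorem presentedGroup_iso_bsSubgroup (k : ℤ) [Fact (1 < k)] :
    ∃ φ : PresentedGroup (bsRels k) ≃* ↥(bsSubgroup k),
      ((φ (PresentedGroup.of true) : ↥(bsSubgroup k)) : BSQ k) = ⟨1, 0⟩ ∧
      ((φ (PresentedGroup.of false) : ↥(bsSubgroup k)) : BSQ k) = ⟨0, 1⟩ :=
  ⟨(MonoidHom.ofInjective bsHom_injective).trans (MulEquiv.subgroupCongr range_bsHom),
    bsLift_of_true BSQ.mk_zero_one_inv_mul_mul, bsLift_of_false BSQ.mk_zero_one_inv_mul_mul⟩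
end

section
/- Let k be an integer with k > 1 and let y ∈ ℤ[1/k]. Then the normal closure of the element (y, 0) in the group G = ℤ[1/k] ⋊ ℤ equals the subgroup A = {(x, 0) : x ∈ ℤ[1/k]} if and only if y is a unit of the ring ℤ[1/k]. -/
/-- The subgroup `A = {(x, 0) : x ∈ ℤ[1/k]}` of `G = ℤ[1/k] ⋊ ℤ`. -/
def aSubgroup (k : ℤ) [Fact (1 < k)] : Subgroup ↥(bsSubgroup k) where
  carrier := {g | (g : BSQ k).m = 0}
  one_mem' := rfl
  mul_mem' := by
    intro a b ha hb
    show ((a : BSQ k) * (b : BSQ k)).m = 0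
    rw [BSQ.mul_m]
    simp only [Set.mem_setOf_eq] at ha hb
    omega
  inv_mem' := by
    intro a ha
    show ((a : BSQ k)⁻¹).m = 0
    rw [BSQ.inv_m]
    simp only [Set.mem_setOf_eq] at ha
    omega

theorem zkSet_one {k : ℤ} : (1 : ℚ) ∈ zkSet k := ⟨1, 0, by norm_num⟩

theorem zkSet_zero {k : ℤ} : (0 : ℚ) ∈ zkSet k := ⟨0, 0, by norm_num⟩

theorem BSQ.pow_eq {k : ℤ} [Fact (1 < k)] (c : ℚ) (n : ℕ) :
    (⟨c, 0⟩ : BSQ k) ^ n = ⟨(n : ℚ) * c, 0⟩ := by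
  induction n with
  | zero => ext <;> simp [pow_zero]
  | succ n ih =>
    rw [pow_succ, ih]
    ext
    · simp only [BSQ.mul_y]
      push_cast
      norm_num
      ring
    · simp only [BSQ.mul_m]; norm_num

theorem BSQ.zpow_eq {k : ℤ} [Fact (1 < k)] (c : ℚ) (n : ℤ) :
    (⟨c, 0⟩ : BSQ k) ^ n = ⟨(n : ℚ) * c, 0⟩ := by
  cases n with
  | ofNat n => rw [Int.ofNat_eq_coe, zpow_natCast, BSQ.pow_eq]; norm_num
  | negSucc n =>
    rw [zpow_negSucc, BSQ.pow_eq]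
    ext
    · simp only [BSQ.inv_y]
      push_cast
      norm_num
      ring
    · simp only [BSQ.inv_m, neg_zero]

/-- The subgroup `{(x,0) : x ∈ y·ℤ[1/k]}` of `G`. -/
def idealSubgroup (k : ℤ) [Fact (1 < k)] (y : ℚ) : Subgroup ↥(bsSubgroup k) where
  carrier := {g | (g : BSQ k).m = 0 ∧ ∃ w ∈ zkSet k, (g : BSQ k).y = y * w}
  one_mem' := ⟨rfl, 0, zkSet_zero, by simp⟩
  mul_mem' := by
    rintro a b ⟨ha0, wa, hwa, ha⟩ ⟨hb0, wb, hwb, hb⟩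
    refine ⟨?_, wa + wb, zkSet_add BSQ.kq_ne_zero hwa hwb, ?_⟩
    · show ((a : BSQ k) * b).m = 0
      rw [BSQ.mul_m]; omega
    · show ((a : BSQ k) * b).y = y * (wa + wb)
      rw [BSQ.mul_y, ha, hb, ha0]
      norm_num
      ring
  inv_mem' := by
    rintro a ⟨ha0, wa, hwa, ha⟩
    refine ⟨?_, -wa, zkSet_neg hwa, ?_⟩
    · show ((a : BSQ k)⁻¹).m = 0
      rw [BSQ.inv_m]; omega
    · show ((a : BSQ k)⁻¹).y = y * (-wa)
      rw [BSQ.inv_y, ha, ha0]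
      norm_num

theorem idealSubgroup_normal (k : ℤ) [Fact (1 < k)] (y : ℚ) :
    (idealSubgroup k y).Normal := by
  constructor
  rintro n ⟨hn0, w, hw, hn⟩ g
  refine ⟨?_, w * (k : ℚ) ^ (-(g : BSQ k).m),
    zkSet_mul_zpow BSQ.kq_ne_zero hw _, ?_⟩
  · show ((g : BSQ k) * n * (g : BSQ k)⁻¹).m = 0
    simp only [BSQ.mul_m, BSQ.inv_m]; omega
  · show ((g : BSQ k) * n * (g : BSQ k)⁻¹).y = y * (w * (k : ℚ) ^ (-(g : BSQ k).m))
    simp only [BSQ.mul_y, BSQ.mul_m, BSQ.inv_y, BSQ.inv_m, hn, hn0, add_zero]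
    have e : (k : ℚ) ^ ((g : BSQ k).m) * (k : ℚ) ^ (-(g : BSQ k).m) = 1 := by
      rw [← zpow_add₀ (BSQ.kq_ne_zero (k := k))]; simp
    linear_combination (-(g : BSQ k).y) * e

theorem aSubgroup_normal (k : ℤ) [Fact (1 < k)] : (aSubgroup k).Normal := by
  constructor
  intro n hn g
  show ((g : BSQ k) * n * (g : BSQ k)⁻¹).m = 0
  have hn0 : (n : BSQ k).m = 0 := hn
  simp only [BSQ.mul_m, BSQ.inv_m, hn0]; omega

/-- **Normal closure criterion.** For `y ∈ ℤ[1/k]`, the normal closure of `(y, 0)`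
in `G = ℤ[1/k] ⋊ ℤ` equals `A = {(x,0) : x ∈ ℤ[1/k]}` iff `y` is a unit of `ℤ[1/k]`. -/
theorem normalClosure_eq_iff_unit (k : ℤ) [Fact (1 < k)] (y : ℚ) (hy : y ∈ zkSet k) :
    Subgroup.normalClosure
        ({⟨⟨y, 0⟩, mem_bsSubgroup hy⟩} : Set ↥(bsSubgroup k)) = aSubgroup k ↔
      ∃ w ∈ zkSet k, y * w = 1 := by
  have hk : (k : ℚ) ≠ 0 := BSQ.kq_ne_zero
  constructor
  · intro h
    have hle : Subgroup.normalClosure ({⟨⟨y, 0⟩, mem_bsSubgroup hy⟩} : Set ↥(bsSubgroup k))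
        ≤ idealSubgroup k y := by
      have := idealSubgroup_normal k y
      apply Subgroup.normalClosure_le_normal
      intro x hx
      rw [Set.mem_singleton_iff] at hx
      subst hx
      exact ⟨rfl, 1, zkSet_one, by simp⟩
    have h1 : (⟨⟨1, 0⟩, mem_bsSubgroup zkSet_one⟩ : ↥(bsSubgroup k)) ∈ aSubgroup k := rfl
    rw [← h] at h1
    obtain ⟨_, w, hw, hyw⟩ := hle h1
    exact ⟨w, hw, hyw.symm⟩
  · rintro ⟨w, hw, hyw⟩
    apply le_antisymm
    · have := aSubgroup_normal k
      apply Subgroup.normalClosure_le_normal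
      intro x hx
      rw [Set.mem_singleton_iff] at hx
      subst hx
      rfl
    · intro g hg
      have hg0 : (g : BSQ k).m = 0 := hg
      obtain ⟨z, i, hzi⟩ := g.2
      obtain ⟨z', i', hzi'⟩ := hw
      set j : ℤ := i + i' with hj
      -- the conjugating element (0, -j)
      have h0mem : ((⟨0, -j⟩ : BSQ k)) ∈ bsSubgroup k := zkSet_zero
      set u : ↥(bsSubgroup k) := ⟨⟨0, -j⟩, h0mem⟩ with hu
      set a : ↥(bsSubgroup k) := ⟨⟨y, 0⟩, mem_bsSubgroup hy⟩ with ha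
      have hmem : a ∈ Subgroup.normalClosure ({a} : Set ↥(bsSubgroup k)) :=
        Subgroup.subset_normalClosure rfl
      have hconj : u * a * u⁻¹ ∈ Subgroup.normalClosure ({a} : Set ↥(bsSubgroup k)) :=
        Subgroup.normalClosure_normal.conj_mem a hmem u
      have hc : ((u * a * u⁻¹ : ↥(bsSubgroup k)) : BSQ k) = ⟨y * (k : ℚ) ^ j, 0⟩ := by
        show ((u : BSQ k) * a * (u : BSQ k)⁻¹) = _
        rw [hu, ha]
        ext
        · simp only [BSQ.mul_y, BSQ.mul_m, BSQ.inv_y, BSQ.inv_m]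
          simp
        · simp only [BSQ.mul_m, BSQ.inv_m]
          omega
      have hpow : (u * a * u⁻¹) ^ (z * z') ∈
          Subgroup.normalClosure ({a} : Set ↥(bsSubgroup k)) :=
        Subgroup.zpow_mem _ hconj _
      have hfinal : (u * a * u⁻¹) ^ (z * z') = g := by
        apply Subtype.ext
        rw [SubgroupClass.coe_zpow, hc, BSQ.zpow_eq]
        ext
        · show ((z * z' : ℤ) : ℚ) * (y * (k : ℚ) ^ j) = (g : BSQ k).y
          rw [hzi, hj, zpow_add₀ hk]
          push_cast
          have : y * ((z' : ℚ) * (k : ℚ) ^ i') = 1 := by rw [← hzi']; exact hyw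
          linear_combination ((z : ℚ) * (k : ℚ) ^ i) * this
        · exact hg0.symm
      rwa [hfinal] at hpow
end

section
/- Let k be an integer with k > 1, let a₁ ∈ A₁ and b₁ ∈ Ab. Then there exists a group automorphism λ of G = ℤ[1/k] ⋊ ℤ such that λ(a) = a₁ and λ(b) = b₁, where a = (1,0) and b = (0,1). -/
/-!
Let `σ : ℤ → ℚ` be the crossed homomorphism with `σ(1) = 1`, i.e. `σ(m₁ + m₂) = σ(m₁) + σ(m₂)·k^{-m₁}`.
This identity makes `(y, m) ↦ (u·y + c·σ(m), m)` an endomorphism of `ℚ ⋊ ℤ` sending `a ↦ (u, 0)` and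
`b ↦ (c, 1)`; these maps compose like affine maps `x ↦ u·x + c`, so for `u` a unit the map is invertible.
Since `σ(m)` is a signed sum of powers of `k`, it preserves `ℤ[1/k] ⋊ ℤ` when `u, c ∈ ℤ[1/k]`, and with
`u = w`, `c = y` it is the required automorphism.
-/

theorem zkSet_mul {k : ℤ} (hk : (k : ℚ) ≠ 0) {p q : ℚ}
    (hp : p ∈ zkSet k) (hq : q ∈ zkSet k) : p * q ∈ zkSet k := by
  obtain ⟨z₁, i₁, rfl⟩ := hp
  obtain ⟨z₂, i₂, rfl⟩ := hq
  exact ⟨z₁ * z₂, i₁ + i₂, by rw [zpow_add₀ hk]; push_cast; ring⟩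

theorem zkSet_zpow (k j : ℤ) : (k : ℚ) ^ j ∈ zkSet k := ⟨1, j, by simp⟩

/-- `σ(m) = 1 + k⁻¹ + ⋯ + k^{-(m-1)}`, in a closed form that extends it to all `m ∈ ℤ` as a
crossed homomorphism for the action `x ↦ x·k^{-m}`. -/
noncomputable def geomCocycle (k m : ℤ) : ℚ := (1 - (k : ℚ) ^ (-m)) * k / (k - 1)

section geomCocycle

variable {k : ℤ} [Fact (1 < k)]

theorem kq_sub_one_ne_zero : (k : ℚ) - 1 ≠ 0 :=
  sub_ne_zero.2 (ne_of_gt (by exact_mod_cast (Fact.out : 1 < k)))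

omit [Fact (1 < k)] in
@[simp] theorem geomCocycle_zero : geomCocycle k 0 = 0 := by simp [geomCocycle]

@[simp] theorem geomCocycle_one : geomCocycle k 1 = 1 := by
  have := kq_sub_one_ne_zero (k := k)
  have := BSQ.kq_ne_zero (k := k)
  rw [geomCocycle, zpow_neg_one]
  field_simp

theorem geomCocycle_add (m₁ m₂ : ℤ) :
    geomCocycle k (m₁ + m₂) = geomCocycle k m₁ + geomCocycle k m₂ * (k : ℚ) ^ (-m₁) := by
  have := kq_sub_one_ne_zero (k := k)
  rw [geomCocycle, geomCocycle, geomCocycle, neg_add, zpow_add₀ BSQ.kq_ne_zero]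
  field_simp
  ring

theorem geomCocycle_mem_zkSet (m : ℤ) : geomCocycle k m ∈ zkSet k := by
  have hk := BSQ.kq_ne_zero (k := k)
  induction m using Int.induction_on with
  | zero => exact ⟨0, 0, by simp⟩
  | succ n ih =>
    rw [geomCocycle_add, geomCocycle_one, one_mul]
    exact zkSet_add hk ih (zkSet_zpow _ _)
  | pred n ih =>
    have hsucc := geomCocycle_add (k := k) (-n - 1) 1
    rw [sub_add_cancel, geomCocycle_one, one_mul] at hsucc
    rw [eq_sub_of_add_eq hsucc.symm, sub_eq_add_neg]
    exact zkSet_add hk ih (zkSet_neg (zkSet_zpow _ _))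

end geomCocycle

namespace BSQ

variable {k : ℤ} [Fact (1 < k)]

noncomputable def affine (u c : ℚ) : BSQ k →* BSQ k where
  toFun g := ⟨u * g.y + c * geomCocycle k g.m, g.m⟩
  map_one' := by ext <;> simp
  map_mul' g h := by
    ext
    · simp only [mul_y, mul_m, geomCocycle_add]
      ring
    · rfl

theorem affine_apply (u c : ℚ) (g : BSQ k) :
    affine u c g = ⟨u * g.y + c * geomCocycle k g.m, g.m⟩ := rfl

theorem affine_affine {u c u' c' : ℚ} (hu : u * u' = 1) (hc : u * c' + c = 0) (g : BSQ k) :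
    affine u c (affine u' c' g) = g := by
  ext
  · simp only [affine_apply]
    linear_combination g.y * hu + geomCocycle k g.m * hc
  · rfl

theorem affine_mem_bsSubgroup {u c : ℚ} (hu : u ∈ zkSet k) (hc : c ∈ zkSet k) {g : BSQ k}
    (hg : g ∈ bsSubgroup k) : affine u c g ∈ bsSubgroup k :=
  zkSet_add kq_ne_zero (zkSet_mul kq_ne_zero hu hg)
    (zkSet_mul kq_ne_zero hc (geomCocycle_mem_zkSet _))

end BSQ

section bsAffine

variable {k : ℤ} [Fact (1 < k)] {u c : ℚ}

noncomputable def bsAffine (hu : u ∈ zkSet k) (hc : c ∈ zkSet k) :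
    bsSubgroup k →* bsSubgroup k :=
  ((BSQ.affine u c).domRestrict (bsSubgroup k)).codRestrict (bsSubgroup k) fun g =>
    BSQ.affine_mem_bsSubgroup hu hc g.2

theorem coe_bsAffine (hu : u ∈ zkSet k) (hc : c ∈ zkSet k) (g : bsSubgroup k) :
    (bsAffine hu hc g : BSQ k) = BSQ.affine u c g := rfl

theorem bsAffine_comp_eq_id {u' c' : ℚ} {hu : u ∈ zkSet k} {hc : c ∈ zkSet k}
    {hu' : u' ∈ zkSet k} {hc' : c' ∈ zkSet k} (h₁ : u * u' = 1) (h₂ : u * c' + c = 0) :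
    (bsAffine hu hc).comp (bsAffine hu' hc') = MonoidHom.id _ :=
  MonoidHom.ext fun g => Subtype.ext (BSQ.affine_affine h₁ h₂ g.1)

end bsAffine

/-- **Lemma 5.** For `a₁ = (w,0) ∈ A₁` (`w` a unit of `ℤ[1/k]`) and `b₁ = (y,1) ∈ Ab`,
the map `a ↦ a₁`, `b ↦ b₁` (where `a = (1,0)`, `b = (0,1)`) extends to an automorphism
of `G = ℤ[1/k] ⋊ ℤ`. -/
theorem exists_automorphism (k : ℤ) [Fact (1 < k)] (w y : ℚ)
    (hw : w ∈ zkSet k) (hw' : ∃ v ∈ zkSet k, w * v = 1) (hy : y ∈ zkSet k) :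
    ∃ lam : ↥(bsSubgroup k) ≃* ↥(bsSubgroup k),
      lam ⟨⟨1, 0⟩, mem_bsSubgroup ⟨1, 0, by norm_num⟩⟩ = ⟨⟨w, 0⟩, mem_bsSubgroup hw⟩ ∧
      lam ⟨⟨0, 1⟩, mem_bsSubgroup ⟨0, 0, by norm_num⟩⟩ = ⟨⟨y, 1⟩, mem_bsSubgroup hy⟩ := by
  obtain ⟨v, hv, hwv⟩ := hw'
  have hvy : -(v * y) ∈ zkSet k := zkSet_neg (zkSet_mul BSQ.kq_ne_zero hv hy)
  refine ⟨(bsAffine hw hy).toMulEquiv (bsAffine hv hvy)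
    (bsAffine_comp_eq_id (by rw [mul_comm, hwv]) (by ring))
    (bsAffine_comp_eq_id hwv (by linear_combination (-y) * hwv)), ?_, ?_⟩
  all_goals exact Subtype.ext (BSQ.ext (by simp [coe_bsAffine, BSQ.affine_apply]) rfl)
end

section
/- Let k be an integer with k > 1 and let b₁ ∈ Ab. Then the centralizer of b₁ in the group G = ℤ[1/k] ⋊ ℤ equals the cyclic subgroup ⟨b₁⟩ = {b₁^{m} : m ∈ ℤ} generated by b₁. -/
/-!
Projecting to the `ℤ`-coordinate shows that an element `g` of level `m` commuting with
`b₁ = (y, 1)` differs from `b₁ ^ m` by an element `(z, 0)` that still commutes with `b₁`.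
Comparing first coordinates of `b₁ (z, 0)` and `(z, 0) b₁` gives `z k⁻¹ = z`, so `z = 0`
because `k ≠ 1`.
-/

namespace BSQ

variable {k : ℤ} [Fact (1 < k)]

theorem zpow_m (g : BSQ k) (n : ℤ) : (g ^ n).m = n * g.m := by
  induction n using Int.induction_on with
  | zero => simp
  | succ n ih => rw [zpow_add_one, mul_m, ih]; ring
  | pred n ih => rw [zpow_sub_one, mul_m, inv_m, ih]; ring

theorem eq_one_of_commute_of_m_eq_zero {b g : BSQ k} (hb : b.m ≠ 0) (hbg : Commute b g)
    (hg : g.m = 0) : g = 1 := by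
  have hk : (1 : ℚ) < k := mod_cast (Fact.out : 1 < k)
  have hy : g.y * (k : ℚ) ^ (-b.m) = g.y := by
    have := congrArg y hbg.eq
    simp only [mul_y, hg, neg_zero, zpow_zero, mul_one] at this
    linarith
  have hpow : (k : ℚ) ^ (-b.m) ≠ 1 := by
    rw [Ne, zpow_eq_one_iff_right₀ (by linarith) hk.ne']
    exact neg_ne_zero.mpr hb
  have hgy : g.y = 0 := by
    by_contra h
    exact hpow ((mul_eq_left₀ h).mp hy)
  ext <;> simp [hgy, hg]

theorem eq_zpow_m_of_commute {b g : BSQ k} (hb : b.m = 1) (hbg : Commute b g) :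
    g = b ^ g.m := by
  have hm : (g * b ^ (-g.m)).m = 0 := by simp [zpow_m, hb]
  have hquot := eq_one_of_commute_of_m_eq_zero (by simp [hb])
    (hbg.mul_right ((Commute.refl b).zpow_right _)) hm
  rwa [zpow_neg, mul_inv_eq_one] at hquot

end BSQ

/-- **Corollary (centralizer).** For `b₁ = (y,1) ∈ Ab`, the centralizer of `b₁` in
`G = ℤ[1/k] ⋊ ℤ` is the cyclic subgroup `⟨b₁⟩ = {b₁^m : m ∈ ℤ}`. -/
theorem centralizer_eq_zpowers (k : ℤ) [Fact (1 < k)] (y : ℚ) (hy : y ∈ zkSet k) :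
    Subgroup.centralizer
        ({⟨⟨y, 1⟩, mem_bsSubgroup hy⟩} : Set ↥(bsSubgroup k)) =
      Subgroup.zpowers (⟨⟨y, 1⟩, mem_bsSubgroup hy⟩ : ↥(bsSubgroup k)) := by
  set b : ↥(bsSubgroup k) := ⟨⟨y, 1⟩, mem_bsSubgroup hy⟩
  refine le_antisymm (fun g hg => ?_) ?_
  · have hbg : Commute (b : BSQ k) g :=
      congrArg Subtype.val (Subgroup.mem_centralizer_singleton_iff.mp hg).symm
    exact ⟨(g : BSQ k).m, Subtype.ext (by simp [← BSQ.eq_zpow_m_of_commute rfl hbg])⟩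
  · exact (Subgroup.zpowers_le).mpr (Subgroup.mem_centralizer_singleton_iff.mpr rfl)
end

section
/- Let k be an integer with k > 1 and let g be an element of G = ℤ[1/k] ⋊ ℤ. Then g satisfies the condition 'for every h ∈ G the elements h⁻¹ g h and g commute' if and only if g ∈ A, i.e. the second coordinate of g is 0. -/
/-- The set `A = {(y,0) : y ∈ ℤ[1/k]}`. -/
def aSet (k : ℤ) : Set (BSQ k) := {g | g.y ∈ zkSet k ∧ g.m = 0}

/-- **Lemma 7 (definability of `A`).** An element `g` of `G = ℤ[1/k] ⋊ ℤ` satisfies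
"`h⁻¹ g h` commutes with `g` for every `h ∈ G`" iff `g ∈ A`, i.e. the second
coordinate of `g` is `0`. -/
theorem forall_conj_commute_iff_mem_A (k : ℤ) [Fact (1 < k)] (g : BSQ k)
    (hg : g.y ∈ zkSet k) :
    (∀ h : BSQ k, h.y ∈ zkSet k → Commute (h⁻¹ * g * h) g) ↔ g ∈ aSet k := by
  have hk : (1 : ℤ) < k := Fact.out
  have hk1 : (1 : ℚ) < (k : ℚ) := by exact_mod_cast hk
  have hk0 : (k : ℚ) ≠ 0 := BSQ.kq_ne_zero
  constructor
  · intro H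
    refine ⟨hg, ?_⟩
    have h1 : ((⟨1, 0⟩ : BSQ k)).y ∈ zkSet k := ⟨1, 0, by norm_num⟩
    have := H ⟨1, 0⟩ h1
    have hy := congrArg BSQ.y this
    simp only [BSQ.mul_y, BSQ.mul_m, BSQ.inv_y, BSQ.inv_m, neg_zero, zero_add, add_zero,
      neg_neg, zpow_zero, one_mul, zpow_neg] at hy
    set t : ℚ := ((k : ℚ) ^ g.m)⁻¹ with ht
    have ht1 : (t - 1) ^ 2 = 0 := by nlinarith [hy]
    have ht2 : t = 1 := by
      have := pow_eq_zero_iff (n := 2) (by norm_num) |>.mp ht1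
      linarith
    have hk1' : (k : ℚ) ^ g.m = 1 := inv_eq_one.mp ht2
    have : (k : ℚ) ^ g.m = (k : ℚ) ^ (0 : ℤ) := by simpa using hk1'
    have := zpow_right_injective₀ (by linarith : (0:ℚ) < k) (by linarith : (k:ℚ) ≠ 1) this
    omega
  · rintro ⟨-, hm⟩ h -
    have hconjm : (h⁻¹ * g * h).m = 0 := by simp [hm]
    unfold Commute SemiconjBy
    ext
    · simp [hconjm, hm]
      ring
    · simp [hconjm, hm]
end
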